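/- (Theorem 3.7) Let X be a strong partitive set of an undirected graph G = (V,E) and let M = M(S) be a multiplex of G generated by a simplex S. If M ∩ E(X) ≠ ∅, then M ⊆ E(X). -/

import Mathlib

open Set

namespace TransOrient

variable {V : Type*}

/-- `E` is the edge set of an undirected graph on the vertex type `V`:
an irreflexive and symmetric relation, given as a set of ordered pairs. -/
def IsGraph (E : Set (V × V)) : Prop :=
  (∀ a : V, (a, a) ∉ E) ∧ (∀ a b : V, (a, b) ∈ E ↔ (b, a) ∈ E)

/-- The forcing relation `Γ` on directed edges:
`(a,b) Γ (a',b')` iff (`a = a'` and `(b,b') ∉ E`) or (`b = b'` and `(a,a') ∉ E`). -/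
def Gamma (E : Set (V × V)) (e e' : V × V) : Prop :=
  e ∈ E ∧ e' ∈ E ∧
    ((e.1 = e'.1 ∧ (e.2, e'.2) ∉ E) ∨ (e.2 = e'.2 ∧ (e.1, e'.1) ∉ E))

/-- The implication classes of `G = (V,E)`: equivalence classes on `E` of
the reflexive-transitive closure of `Γ`. -/
def IsImplicationClass (E : Set (V × V)) (A : Set (V × V)) : Prop :=
  ∃ e ∈ E, A = {e' | Relation.ReflTransGen (Gamma E) e e'}

/-- `A⁻¹ = {(b,a) : (a,b) ∈ A}`. -/
def inv (A : Set (V × V)) : Set (V × V) := {p | (p.2, p.1) ∈ A}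

/-- The color class `Â = A ∪ A⁻¹` of an implication class `A`. -/
def hat (A : Set (V × V)) : Set (V × V) := A ∪ inv A

/-- `Ã`: the set of vertices incident to an edge of `A`. -/
def tilde (A : Set (V × V)) : Set V := {v | ∃ w, (v, w) ∈ A ∨ (w, v) ∈ A}

/-- A transitive orientation `E'` of a symmetric edge set `F`:
`E' ⊆ F`, `E' ∩ E'⁻¹ = ∅`, `E' ∪ E'⁻¹ = F` and `E'` is transitive. -/
def IsTransOrientation (F E' : Set (V × V)) : Prop :=
  E' ⊆ F ∧ E' ∩ inv E' = ∅ ∧ E' ∪ inv E' = F ∧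
    ∀ a b c : V, (a, b) ∈ E' → (b, c) ∈ E' → (a, c) ∈ E'

/-- `G` is a comparability graph if `E` admits a transitive orientation. -/
def IsComparability (E : Set (V × V)) : Prop :=
  ∃ E' : Set (V × V), IsTransOrientation E E'

/-- `E(X)`: the set of edges of `E` with both endpoints in `X`. -/
def edgesOn (E : Set (V × V)) (X : Set V) : Set (V × V) :=
  {p ∈ E | p.1 ∈ X ∧ p.2 ∈ X}

/-- `X` is a partitive set of `G = (V,E)`. -/
def IsPartitive (E : Set (V × V)) (X : Set V) : Prop :=
  ∀ a ∈ X, ∀ b ∈ X, ∀ c ∉ X, ((a, c) ∈ E ↔ (b, c) ∈ E)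

/-- `X` is a "strong" partitive set of `G = (V,E)`. -/
def IsStrongPartitive (E : Set (V × V)) (X : Set V) : Prop :=
  IsPartitive E X ∧
    ∀ Y : Set V, IsPartitive E Y → (Y ∩ X).Nonempty → X ⊆ Y ∨ Y ⊆ X

/-- `X` is a maximal "strong" partitive set of `G = (V,E)`: a strong partitive
set different from `V` which is maximal, for inclusion, among the strong
partitive sets different from `V`. -/
def IsMaxStrongPartitive (E : Set (V × V)) (X : Set V) : Prop :=
  IsStrongPartitive E X ∧ X ≠ Set.univ ∧
    ∀ Y : Set V, IsStrongPartitive E Y → Y ≠ Set.univ → X ⊆ Y → X = Y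

/-- `X` is a partitive set of the induced subgraph `G(W) = (W, E(W))`. -/
def IsPartitiveIn (E : Set (V × V)) (W : Set V) (X : Set V) : Prop :=
  X ⊆ W ∧ ∀ a ∈ X, ∀ b ∈ X, ∀ c ∈ W \ X,
    ((a, c) ∈ edgesOn E W ↔ (b, c) ∈ edgesOn E W)

/-- `X` is a "strong" partitive set of the induced subgraph `G(W)`. -/
def IsStrongPartitiveIn (E : Set (V × V)) (W : Set V) (X : Set V) : Prop :=
  IsPartitiveIn E W X ∧
    ∀ Y : Set V, IsPartitiveIn E W Y → (Y ∩ X).Nonempty → X ⊆ Y ∨ Y ⊆ X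

/-- `X` is a maximal "strong" partitive set of the induced subgraph `G(W)`. -/
def IsMaxStrongPartitiveIn (E : Set (V × V)) (W : Set V) (X : Set V) : Prop :=
  IsStrongPartitiveIn E W X ∧ X ≠ W ∧
    ∀ Y : Set V, IsStrongPartitiveIn E W Y → Y ≠ W → X ⊆ Y → X = Y

/-- Two directed edges lie in the same color class of `G = (V,E)`. -/
def SameColor (E : Set (V × V)) (e e' : V × V) : Prop :=
  ∃ A : Set (V × V), IsImplicationClass E A ∧ e ∈ hat A ∧ e' ∈ hat A

/-- A simplex of `G = (V,E)` given by its (finite, nonempty) vertex set `VS`: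
a complete induced subgraph whose edges, for distinct unordered pairs,
lie in distinct color classes of `G`. -/
def IsSimplex (E : Set (V × V)) (VS : Set V) : Prop :=
  VS.Finite ∧ VS.Nonempty ∧
    (∀ a ∈ VS, ∀ b ∈ VS, a ≠ b → (a, b) ∈ E) ∧
    (∀ a ∈ VS, ∀ b ∈ VS, ∀ c ∈ VS, ∀ d ∈ VS, a ≠ b → c ≠ d →
      SameColor E (a, b) (c, d) → (a = c ∧ b = d) ∨ (a = d ∧ b = c))

/-- The rank of a simplex on `r+1` vertices is `r`. -/
noncomputable def simplexRank (VS : Set V) : ℕ := VS.ncard - 1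

/-- A maximal simplex: its vertex set is not properly contained in the
vertex set of another simplex. -/
def IsMaxSimplex (E : Set (V × V)) (VS : Set V) : Prop :=
  IsSimplex E VS ∧ ∀ VS' : Set V, IsSimplex E VS' → VS ⊆ VS' → VS = VS'

/-- The multiplex `M(S)` generated by a simplex with vertex set `VS`:
the union of all color classes of `G` containing an edge of the simplex. -/
def multiplex (E : Set (V × V)) (VS : Set V) : Set (V × V) :=
  {e | ∃ A : Set (V × V), IsImplicationClass E A ∧ e ∈ hat A ∧
    ∃ a ∈ VS, ∃ b ∈ VS, a ≠ b ∧ (a, b) ∈ hat A}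

/-- A maximal multiplex of `G`: a multiplex generated by a maximal simplex. -/
def IsMaxMultiplex (E : Set (V × V)) (M : Set (V × V)) : Prop :=
  ∃ VS : Set V, IsMaxSimplex E VS ∧ M = multiplex E VS

/-- `P` is a partition of the set `W`. -/
def IsPartitionOf (W : Set V) (P : Set (Set V)) : Prop :=
  (∀ X ∈ P, X.Nonempty) ∧ ⋃₀ P = W ∧
    ∀ X ∈ P, ∀ Y ∈ P, X ≠ Y → X ∩ Y = ∅

/-- Adjacency in the quotient of the induced subgraph `G(W)` by a partition:
two distinct blocks are adjacent iff some pair of representatives is an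
edge of `E(W)`. -/
def quotAdj (E : Set (V × V)) (W : Set V) (X Y : Set V) : Prop :=
  X ≠ Y ∧ ∃ x ∈ X, ∃ y ∈ Y, (x, y) ∈ edgesOn E W

/-- A partitive set of an abstract graph with vertex set `W` and adjacency
relation `Adj`. -/
def IsPartitiveGen {α : Type*} (W : Set α) (Adj : α → α → Prop) (X : Set α) : Prop :=
  X ⊆ W ∧ ∀ a ∈ X, ∀ b ∈ X, ∀ c ∈ W \ X, (Adj a c ↔ Adj b c)

/-- An abstract graph `(W, Adj)` is indecomposable if all its partitive
sets are trivial. -/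
def IndecomposableGen {α : Type*} (W : Set α) (Adj : α → α → Prop) : Prop :=
  ∀ X : Set α, IsPartitiveGen W Adj X → X.Subsingleton ∨ X = W

/-- An isomorphism between the graphs `(Vα, Aα)` and `(Vβ, Aβ)`:
a bijection of the vertex sets preserving adjacency in both directions. -/
def GraphIso {α β : Type*} (Vα : Set α) (Aα : α → α → Prop)
    (Vβ : Set β) (Aβ : β → β → Prop) : Prop :=
  ∃ f : α → β, Set.BijOn f Vα Vβ ∧
    ∀ a ∈ Vα, ∀ b ∈ Vα, (Aα a b ↔ Aβ (f a) (f b))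

/-- `(V', E')` is a subgraph of the induced subgraph `G(W)` of `G = (V,E)`. -/
def IsSubgraphOf (E : Set (V × V)) (W : Set V) (V' : Set V) (E' : Set (V × V)) : Prop :=
  V' ⊆ W ∧ E' ⊆ edgesOn E W ∧ (∀ e ∈ E', e.1 ∈ V' ∧ e.2 ∈ V') ∧
    (∀ a b : V, (a, b) ∈ E' ↔ (b, a) ∈ E')

end TransOrient

/-!
If an implication class has an edge inside a partitive set `X`, each `Γ`-step keeps it inside
`X`, so the whole color class lies in `E(X)`. Hence a multiplex meeting `E(X)` has a simplex
edge `a b` inside `X`, and it suffices to show that the simplex lies in `X`. A simplex vertex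
`c ∉ X` would see `a` and `b`, and for a strong `X` the edges `c a` and `c b` have the same
color, which a simplex forbids. To see this, let `C` be the co-component of `a` in `G(X)` and
`K` that of `c` among the vertices outside `X` adjacent to `X`: edges `c x` with `x ∈ C`, and
edges `u x` with `u ∈ K`, are forced into one class. Unless some `u ∈ K` has a neighbour
outside `X` not adjacent to `X`, which forces `u a` to `u b` at once, `C ∪ K` is partitive;
it meets `X` and contains `c`, so strongness puts `b` in `C`.
-/

namespace TransOrient

open Relation

variable {V : Type*} {E : Set (V × V)}

lemma IsGraph.symm (hG : IsGraph E) {a b : V} (h : (a, b) ∈ E) : (b, a) ∈ E :=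
  (hG.2 a b).1 h

lemma IsGraph.gamma_symm (hG : IsGraph E) {e e' : V × V} (h : Gamma E e e') :
    Gamma E e' e := by
  obtain ⟨he, he', h | h⟩ := h
  · exact ⟨he', he, .inl ⟨h.1.symm, fun h' => h.2 (hG.symm h')⟩⟩
  · exact ⟨he', he, .inr ⟨h.1.symm, fun h' => h.2 (hG.symm h')⟩⟩

lemma IsGraph.reflTransGen_gamma_symm (hG : IsGraph E) {e e' : V × V}
    (h : ReflTransGen (Gamma E) e e') : ReflTransGen (Gamma E) e' e :=
  have : Std.Symm (Gamma E) := ⟨fun _ _ => hG.gamma_symm⟩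
  Std.Symm.symm _ _ h

lemma swap_mem_edgesOn (hG : IsGraph E) {X : Set V} {p : V × V} (hp : p ∈ edgesOn E X) :
    p.swap ∈ edgesOn E X :=
  ⟨hG.symm hp.1, hp.2.2, hp.2.1⟩

section Partitive

variable {X : Set V}

lemma IsPartitive.gamma_mem_edgesOn (hG : IsGraph E) (hX : IsPartitive E X) {e e' : V × V}
    (h : Gamma E e e') (he : e ∈ edgesOn E X) : e' ∈ edgesOn E X := by
  obtain ⟨-, he', h | h⟩ := h
  · refine ⟨he', h.1 ▸ he.2.1, ?_⟩
    by_contra hX'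
    exact h.2 ((hX _ he.2.2 _ he.2.1 _ hX').2 (h.1 ▸ he'))
  · refine ⟨he', ?_, h.1 ▸ he.2.2⟩
    by_contra hX'
    exact h.2 ((hX _ he.2.1 _ he.2.2 _ hX').2 (h.1 ▸ hG.symm he'))

lemma IsPartitive.reflTransGen_gamma_mem_edgesOn (hG : IsGraph E) (hX : IsPartitive E X)
    {e e' : V × V} (h : ReflTransGen (Gamma E) e e') (he : e ∈ edgesOn E X) :
    e' ∈ edgesOn E X := by
  induction h with
  | refl => exact he
  | tail _ hstep ih => exact hX.gamma_mem_edgesOn hG hstep ih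

lemma IsPartitive.subset_edgesOn (hG : IsGraph E) (hX : IsPartitive E X) {A : Set (V × V)}
    (hA : IsImplicationClass E A) {e : V × V} (heA : e ∈ A) (heX : e ∈ edgesOn E X) :
    A ⊆ edgesOn E X := by
  obtain ⟨g, -, rfl⟩ := hA
  exact fun e' he' => hX.reflTransGen_gamma_mem_edgesOn hG
    ((hG.reflTransGen_gamma_symm heA).trans he') heX

lemma IsPartitive.hat_subset_edgesOn (hG : IsGraph E) (hX : IsPartitive E X)
    {A : Set (V × V)} (hA : IsImplicationClass E A) {e : V × V} (he : e ∈ hat A)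
    (heX : e ∈ edgesOn E X) : hat A ⊆ edgesOn E X := by
  have hAX : A ⊆ edgesOn E X := by
    rcases he with he | he
    · exact hX.subset_edgesOn hG hA he heX
    · exact hX.subset_edgesOn hG hA he (swap_mem_edgesOn hG heX)
  rintro e' (he' | he')
  · exact hAX he'
  · exact swap_mem_edgesOn hG (hAX he')

end Partitive

def CoAdjOn (E : Set (V × V)) (S : Set V) (u w : V) : Prop :=
  u ∈ S ∧ w ∈ S ∧ (u, w) ∉ E

def coComponent (E : Set (V × V)) (S : Set V) (a : V) : Set V :=
  {x | ReflTransGen (CoAdjOn E S) a x}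

/-- For partitive `X ∋ a`, these are the vertices outside `X` adjacent to all of `X`. -/
def outerNbrs (E : Set (V × V)) (X : Set V) (a : V) : Set V :=
  {u | u ∉ X ∧ (a, u) ∈ E}

section CoComponent

variable {S : Set V}

lemma coComponent_subset {a : V} (ha : a ∈ S) : coComponent E S a ⊆ S := by
  intro x hx
  induction hx with
  | refl => exact ha
  | tail _ hstep _ => exact hstep.2.1

lemma reflTransGen_gamma_of_coComponent_left {c u w : V} (hc : ∀ s ∈ S, (c, s) ∈ E)
    (hw : w ∈ coComponent E S u) : ReflTransGen (Gamma E) (c, u) (c, w) :=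
  ReflTransGen.lift (fun x => (c, x))
    (fun _ _ ⟨hu, hw, huw⟩ => ⟨hc _ hu, hc _ hw, .inl ⟨rfl, huw⟩⟩) _ _ hw

lemma reflTransGen_gamma_of_coComponent_right {x u w : V} (hx : ∀ s ∈ S, (s, x) ∈ E)
    (hw : w ∈ coComponent E S u) : ReflTransGen (Gamma E) (u, x) (w, x) :=
  ReflTransGen.lift (fun v => (v, x))
    (fun _ _ ⟨hu, hw, huw⟩ => ⟨hx _ hu, hx _ hw, .inr ⟨rfl, huw⟩⟩) _ _ hw

end CoComponent

section StrongPartitive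

variable {X : Set V} {a c : V}

lemma IsPartitive.adj_of_mem_outerNbrs (hG : IsGraph E) (hX : IsPartitive E X) (ha : a ∈ X)
    {u x : V} (hu : u ∈ outerNbrs E X a) (hx : x ∈ X) : (u, x) ∈ E :=
  hG.symm ((hX a ha x hx u hu.1).1 hu.2)

lemma IsPartitive.reflTransGen_gamma_of_split (hG : IsGraph E) (hX : IsPartitive E X)
    (ha : a ∈ X) {b u d : V} (hb : b ∈ X) (hu : u ∈ outerNbrs E X a) (hd : d ∉ X)
    (had : (a, d) ∉ E) (hud : (u, d) ∈ E) : ReflTransGen (Gamma E) (u, a) (u, b) := by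
  have hbd : (b, d) ∉ E := fun h => had ((hX b hb a ha d hd).1 h)
  refine ReflTransGen.head ⟨hG.symm hu.2, hud, .inl ⟨rfl, had⟩⟩ (ReflTransGen.single ?_)
  exact ⟨hud, hX.adj_of_mem_outerNbrs hG ha hu hb, .inl ⟨rfl, fun h => hbd (hG.symm h)⟩⟩

lemma IsPartitive.isPartitive_coComponent_union (hG : IsGraph E) (hX : IsPartitive E X)
    (ha : a ∈ X) (hc : c ∈ outerNbrs E X a)
    (hsplit : ∀ u ∈ coComponent E (outerNbrs E X a) c, ∀ d ∉ X, (a, d) ∉ E → (u, d) ∉ E) :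
    IsPartitive E (coComponent E X a ∪ coComponent E (outerNbrs E X a) c) := by
  set Y := coComponent E X a ∪ coComponent E (outerNbrs E X a) c
  suffices h : ∀ y ∈ Y, ∀ d ∉ Y, ((y, d) ∈ E ↔ d ∈ X ∨ (a, d) ∈ E) from
    fun y₁ hy₁ y₂ hy₂ d hd => (h y₁ hy₁ d hd).trans (h y₂ hy₂ d hd).symm
  intro y hy d hdY
  by_cases hdX : d ∈ X
  · simp only [hdX, true_or, iff_true]
    rcases hy with hyC | hyK
    · by_contra hyd
      exact hdY (.inl (hyC.tail ⟨coComponent_subset ha hyC, hdX, hyd⟩))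
    · exact hX.adj_of_mem_outerNbrs hG ha (coComponent_subset hc hyK) hdX
  simp only [hdX, false_or]
  rcases hy with hyC | hyK
  · exact (hX a ha y (coComponent_subset ha hyC) d hdX).symm
  by_cases had : (a, d) ∈ E
  · simp only [had, iff_true]
    by_contra hyd
    exact hdY (.inr (hyK.tail ⟨coComponent_subset hc hyK, ⟨hdX, had⟩, hyd⟩))
  · simpa only [had, iff_false] using hsplit y hyK d hdX had

lemma IsStrongPartitive.reflTransGen_gamma (hG : IsGraph E) (hX : IsStrongPartitive E X)
    {b : V} (ha : a ∈ X) (hb : b ∈ X) (hc : c ∉ X) (hac : (a, c) ∈ E) :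
    ReflTransGen (Gamma E) (c, a) (c, b) := by
  set N := outerNbrs E X a
  have hcN : c ∈ N := ⟨hc, hac⟩
  have hNX : ∀ x ∈ X, ∀ u ∈ N, (u, x) ∈ E := fun x hx u hu =>
    hX.1.adj_of_mem_outerNbrs hG ha hu hx
  by_cases hsplit : ∃ u ∈ coComponent E N c, ∃ d ∉ X, (a, d) ∉ E ∧ (u, d) ∈ E
  · obtain ⟨u, hu, d, hd, had, hud⟩ := hsplit
    have hca_ua := reflTransGen_gamma_of_coComponent_right (hNX a ha) hu
    have hua_ub := hX.1.reflTransGen_gamma_of_split hG ha hb (coComponent_subset hcN hu) hd had hud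
    have hcb_ub := reflTransGen_gamma_of_coComponent_right (hNX b hb) hu
    exact (hca_ua.trans hua_ub).trans (hG.reflTransGen_gamma_symm hcb_ub)
  push Not at hsplit
  have hY := hX.1.isPartitive_coComponent_union hG ha hcN hsplit
  have hXY := (hX.2 _ hY ⟨a, .inl .refl, ha⟩).resolve_right fun h => hc (h (.inr .refl))
  have hbC : b ∈ coComponent E X a :=
    (hXY hb).resolve_right fun h => (coComponent_subset hcN h).1 hb
  exact reflTransGen_gamma_of_coComponent_left (fun x hx => hNX x hx c hcN) hbC

lemma IsStrongPartitive.sameColor (hG : IsGraph E) (hX : IsStrongPartitive E X) {b : V}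
    (ha : a ∈ X) (hb : b ∈ X) (hc : c ∉ X) (hac : (a, c) ∈ E) :
    SameColor E (a, c) (b, c) :=
  ⟨_, ⟨(c, a), hG.symm hac, rfl⟩, .inr ReflTransGen.refl,
    .inr (hX.reflTransGen_gamma hG ha hb hc hac)⟩

lemma IsSimplex.subset_of_strongPartitive {VS : Set V} (hS : IsSimplex E VS) (hG : IsGraph E)
    (hX : IsStrongPartitive E X) {b : V} (ha : a ∈ VS) (hb : b ∈ VS) (hab : a ≠ b)
    (haX : a ∈ X) (hbX : b ∈ X) : VS ⊆ X := by
  intro c hc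
  by_contra hcX
  have hca : c ≠ a := fun h => hcX (h ▸ haX)
  have hcb : c ≠ b := fun h => hcX (h ▸ hbX)
  have hsame := hX.sameColor hG haX hbX hcX (hS.2.2.1 a ha c hc hca.symm)
  rcases hS.2.2.2 a ha c hc b hb c hc hca.symm hcb.symm hsame with ⟨h, -⟩ | ⟨h, -⟩
  · exact hab h
  · exact hca h.symm

end StrongPartitive

end TransOrient

open TransOrient in
/-- **(Theorem 3.7)** If `X` is a strong partitive set and `M = M(S)` a
multiplex of `G`, then `M ∩ E(X) ≠ ∅` implies `M ⊆ E(X)`. -/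
theorem multiplex_subset_of_meets_strong_partitive
    {V : Type*} (E : Set (V × V)) (hG : IsGraph E)
    (X : Set V) (hX : IsStrongPartitive E X)
    (VS : Set V) (hS : IsSimplex E VS)
    (hne : (multiplex E VS ∩ edgesOn E X).Nonempty) :
    multiplex E VS ⊆ edgesOn E X := by
  obtain ⟨e₀, ⟨A₀, hA₀, he₀, a₀, ha₀, b₀, hb₀, hab₀, hA₀ab⟩, he₀X⟩ := hne
  obtain ⟨-, ha₀X, hb₀X⟩ := hX.1.hat_subset_edgesOn hG hA₀ he₀ he₀X hA₀ab
  have hVS : VS ⊆ X := hS.subset_of_strongPartitive hG hX ha₀ hb₀ hab₀ ha₀X hb₀X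
  rintro e ⟨A, hA, he, a, ha, b, hb, hab, hAab⟩
  have habX : (a, b) ∈ edgesOn E X := ⟨hS.2.2.1 a ha b hb hab, hVS ha, hVS hb⟩
  exact hX.1.hat_subset_edgesOn hG hA hAab habX he
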